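/- The common zero locus in ℂ³ of the three polynomials p1, p2, p3 defined in the context, i.e. the set {(a,b,c) ∈ ℂ³ : p1(a,b,c) = p2(a,b,c) = p3(a,b,c) = 0}, is exactly the union of the three affine lines {(t, 0, 0) : t ∈ ℂ} ∪ {(-1-t, t, 0) : t ∈ ℂ} ∪ {(0, t, -2-2t) : t ∈ ℂ}. -/
import Mathlib


/- The Harish–Chandra projections (as functions on ℂ³) of a basis of the zero-weight
component of the `U(B₃)`-submodule generated, under the left-adjoint action, by the image
in the Zhu algebra of the conformal-weight-2 singular vector of `V^{-2}(B₃)`. -/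

noncomputable def pB1 (h1 h2 h3 : ℂ) : ℂ := (2*h2 + h3)*(h1 + h2 + h3) + 2*(h2 + h3)

noncomputable def pB2 (h1 h2 h3 : ℂ) : ℂ := (h2 + h3)*(2*h1 + 2*h2 + h3 + 2)

noncomputable def pB3 (h1 h2 h3 : ℂ) : ℂ := h3*(h1 + 2*h2 + h3 + 2)

/-- The common zero locus in ℂ³ of `pB1, pB2, pB3` is exactly the union of the three
affine lines `{(t,0,0)}`, `{(-1-t,t,0)}` and `{(0,t,-2-2t)}` (corresponding to the three
one-parameter families of highest weights `μ₁(t) = t·ϖ₁`, `μ₂(t) = (-1-t)·ϖ₁ + t·ϖ₂`,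
`μ₃(t) = t·ϖ₂ - 2(1+t)·ϖ₃` of the irreducible modules in category 𝒪 of
`V^{-2}(B₃)/I^{B₃}`). -/
theorem zero_locus_B3_singular :
    {z : ℂ × ℂ × ℂ | pB1 z.1 z.2.1 z.2.2 = 0 ∧ pB2 z.1 z.2.1 z.2.2 = 0 ∧
      pB3 z.1 z.2.1 z.2.2 = 0} =
    {z : ℂ × ℂ × ℂ | ∃ t : ℂ, z = (t, 0, 0)} ∪
    {z : ℂ × ℂ × ℂ | ∃ t : ℂ, z = (-1 - t, t, 0)} ∪
    {z : ℂ × ℂ × ℂ | ∃ t : ℂ, z = (0, t, -2 - 2*t)} := by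
  ext ⟨a, b, c⟩
  simp only [Set.mem_setOf_eq, Set.mem_union, pB1, pB2, pB3, Prod.mk.injEq]
  constructor
  · rintro ⟨h1, h2, h3⟩
    rcases mul_eq_zero.mp h2 with hbc | h2'
    · have hc : c = -b := by linear_combination hbc
      subst hc
      have hab : b * a = 0 := by linear_combination h1
      rcases mul_eq_zero.mp hab with hb | ha
      · exact Or.inl (Or.inl ⟨a, rfl, hb, by rw [hb]; ring⟩)
      · have hb2 : (-b) * (b + 2) = 0 := by linear_combination h3 + b * ha
        rcases mul_eq_zero.mp hb2 with hb | hb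
        · have hb : b = 0 := by linear_combination -hb
          exact Or.inl (Or.inl ⟨a, rfl, hb, by rw [hb]; ring⟩)
        · have hb : b = -2 := by linear_combination hb
          exact Or.inr ⟨-2, ha, hb, by rw [hb]; ring⟩
    · rcases mul_eq_zero.mp h3 with hc | h3'
      · exact Or.inl (Or.inr ⟨b, by linear_combination (1/2 : ℂ) * h2' - (1/2 : ℂ) * hc, rfl, hc⟩)
      · have ha : a = 0 := by linear_combination h2' - h3'
        exact Or.inr ⟨b, ha, rfl, by linear_combination h3' - ha⟩
  · rintro ((⟨t, rfl, rfl, rfl⟩ | ⟨t, rfl, rfl, rfl⟩) | ⟨t, rfl, rfl, rfl⟩) <;>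
      refine ⟨by ring, by ring, by ring⟩
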